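/- arXiv:2509.15797 — 3 statements merged into one kernel-verified Lean document; each statement's English description precedes it below -/
import Mathlib

section
/- Suppose α, α' ∈ ℝ^n and Z, Z' ∈ ℝ^{n×k} with 1_n^T Z = 0, 1_n^T Z' = 0, and Z of full column rank k. If α 1_n^T + 1_n α^T + Z Z^T = α' 1_n^T + 1_n α'^T + Z' Z'^T, then α = α' and there exists an orthogonal matrix O ∈ ℝ^{k×k} with Z' = Z O. -/
open Matrix


lemma lsm_aux {n k : ℕ} (Z Z' : Matrix (Fin n) (Fin k) ℝ)
    (hrank : Z.rank = k) (h : Z * Zᵀ = Z' * Z'ᵀ) :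
    ∃ O : Matrix (Fin k) (Fin k) ℝ, O * Oᵀ = 1 ∧ Oᵀ * O = 1 ∧ Z' = Z * O := by
  set G : Matrix (Fin k) (Fin k) ℝ := Zᵀ * Z with hG
  have hGunit : IsUnit G := by
    rw [← Matrix.mulVec_surjective_iff_isUnit]
    have hr : Module.finrank ℝ (LinearMap.range G.mulVecLin) = k := by
      have := Matrix.rank_transpose_mul_self Z
      rw [hrank] at this
      exact this
    have htop : LinearMap.range G.mulVecLin = ⊤ := by
      apply Submodule.eq_top_of_finrank_eq
      rw [hr, Module.finrank_fintype_fun_eq_card, Fintype.card_fin]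
    intro v
    obtain ⟨w, hw⟩ := LinearMap.range_eq_top.mp htop v
    exact ⟨w, hw⟩
  haveI : Invertible G := hGunit.invertible
  set M : Matrix (Fin k) (Fin k) ℝ := Zᵀ * Z' with hM
  set O : Matrix (Fin k) (Fin k) ℝ := ⅟G * M with hO
  have hGsymm : Gᵀ = G := by rw [hG, transpose_mul, transpose_transpose]
  have e1 : M * Mᵀ = G * G := by
    calc M * Mᵀ = Zᵀ * Z' * (Z'ᵀ * Z) := by rw [hM, transpose_mul, transpose_transpose]
    _ = Zᵀ * (Z' * Z'ᵀ) * Z := by rw [Matrix.mul_assoc, Matrix.mul_assoc, Matrix.mul_assoc]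
    _ = Zᵀ * (Z * Zᵀ) * Z := by rw [h]
    _ = G * G := by rw [hG, Matrix.mul_assoc, Matrix.mul_assoc, Matrix.mul_assoc]
  have hOO : O * Oᵀ = 1 := by
    calc O * Oᵀ = ⅟G * (M * Mᵀ) * (⅟G)ᵀ := by
          rw [hO, transpose_mul]; noncomm_ring
    _ = ⅟G * (G * G) * (⅟G)ᵀ := by rw [e1]
    _ = (⅟G * G) * (G * (⅟G)ᵀ) := by noncomm_ring
    _ = G * (⅟G)ᵀ := by rw [invOf_mul_self, Matrix.one_mul]
    _ = (⅟G * Gᵀ)ᵀ := by rw [transpose_mul, transpose_transpose]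
    _ = 1 := by rw [hGsymm, invOf_mul_self, transpose_one]
  have c1 : (Z * O) * Z'ᵀ = Z * Zᵀ := by
    have key : Zᵀ * (Z * Zᵀ) = G * Zᵀ := by rw [hG, Matrix.mul_assoc]
    calc (Z * O) * Z'ᵀ = Z * ⅟G * (Zᵀ * (Z' * Z'ᵀ)) := by
          rw [hO, hM]; simp only [Matrix.mul_assoc]
    _ = Z * ⅟G * (Zᵀ * (Z * Zᵀ)) := by rw [h]
    _ = Z * (⅟G * G) * Zᵀ := by rw [key]; simp only [Matrix.mul_assoc]
    _ = Z * Zᵀ := by rw [invOf_mul_self, Matrix.mul_one]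
  have c2 : Z' * (Z * O)ᵀ = Z * Zᵀ := by
    have := congrArg transpose c1
    simpa [transpose_mul, transpose_transpose, Matrix.mul_assoc] using this
  have c3 : (Z * O) * (Z * O)ᵀ = Z * Zᵀ := by
    calc (Z * O) * (Z * O)ᵀ = Z * (O * Oᵀ) * Zᵀ := by
          rw [transpose_mul]; simp only [Matrix.mul_assoc]
    _ = Z * Zᵀ := by rw [hOO, Matrix.mul_one]
  have hzero : (Z' - Z * O) * (Z' - Z * O)ᵀ = 0 := by
    rw [transpose_sub, Matrix.sub_mul, Matrix.mul_sub, Matrix.mul_sub, c2, c3, c1, ← h]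
    abel
  have : Z' - Z * O = 0 := by
    have h2 : (Z' - Z * O) * (Z' - Z * O)ᴴ = 0 := by
      rwa [conjTranspose_eq_transpose_of_trivial]
    exact self_mul_conjTranspose_eq_zero.mp h2
  exact ⟨O, hOO, mul_eq_one_comm.mp hOO, sub_eq_zero.mp this⟩

lemma lsm_alpha {n k : ℕ} (hn : 0 < n)
    (α α' : Fin n → ℝ) (Z Z' : Matrix (Fin n) (Fin k) ℝ)
    (hZ : vecMul (fun _ => (1 : ℝ)) Z = 0)
    (hZ' : vecMul (fun _ => (1 : ℝ)) Z' = 0)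
    (heq : vecMulVec α (fun _ => (1 : ℝ)) + vecMulVec (fun _ => (1 : ℝ)) α + Z * Zᵀ
         = vecMulVec α' (fun _ => (1 : ℝ)) + vecMulVec (fun _ => (1 : ℝ)) α' + Z' * Z'ᵀ) :
    α = α' := by
  have hs : ∀ l, ∑ j, Z j l = 0 := fun l => by
    have := congr_fun hZ l
    simpa [Matrix.vecMul, dotProduct] using this
  have hs' : ∀ l, ∑ j, Z' j l = 0 := fun l => by
    have := congr_fun hZ' l
    simpa [Matrix.vecMul, dotProduct] using this
  have hrow : ∀ i, ∑ j, (Z * Zᵀ) i j = 0 := fun i => by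
    simp only [Matrix.mul_apply, Matrix.transpose_apply]
    rw [Finset.sum_comm]
    simp [← Finset.mul_sum, hs]
  have hrow' : ∀ i, ∑ j, (Z' * Z'ᵀ) i j = 0 := fun i => by
    simp only [Matrix.mul_apply, Matrix.transpose_apply]
    rw [Finset.sum_comm]
    simp [← Finset.mul_sum, hs']
  have hij : ∀ i j, α i + α j + (Z * Zᵀ) i j = α' i + α' j + (Z' * Z'ᵀ) i j := fun i j => by
    have := congr_fun (congr_fun heq i) j
    simpa [Matrix.add_apply, Matrix.vecMulVec_apply] using this
  set S := ∑ j, α j with hS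
  set S' := ∑ j, α' j with hS'
  have h1 : ∀ i, (n : ℝ) * α i + S = (n : ℝ) * α' i + S' := fun i => by
    have := Finset.sum_congr rfl (fun j (_ : j ∈ Finset.univ) => hij i j)
    simpa [Finset.sum_add_distrib, hrow i, hrow' i, Finset.card_fin,
      mul_comm] using this
  have h2 : S = S' := by
    have := Finset.sum_congr rfl (fun i (_ : i ∈ Finset.univ) => h1 i)
    simp only [Finset.sum_add_distrib, Finset.sum_const, Finset.card_fin,
      ← Finset.mul_sum, nsmul_eq_mul, ← hS, ← hS'] at this
    have hn' : (0 : ℝ) < n := by exact_mod_cast hn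
    nlinarith [this]
  funext i
  have := h1 i
  rw [h2] at this
  have hn' : (0 : ℝ) < n := by exact_mod_cast hn
  have := add_right_cancel this
  exact mul_left_cancel₀ (ne_of_gt hn') this


/-- Identifiability of the latent space model: if the two parameterizations give
the same `Θ = α 1ᵀ + 1 αᵀ + Z Zᵀ`, the columns of `Z` and `Z'` sum to zero, and
`Z` has full column rank, then `α = α'` and `Z' = Z O` for an orthogonal `O`. -/
theorem lsm_identifiability (n k : ℕ)
    (α α' : Fin n → ℝ) (Z Z' : Matrix (Fin n) (Fin k) ℝ)
    (hZ : vecMul (fun _ => (1 : ℝ)) Z = 0)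
    (hZ' : vecMul (fun _ => (1 : ℝ)) Z' = 0)
    (hrank : Z.rank = k)
    (heq : vecMulVec α (fun _ => (1 : ℝ)) + vecMulVec (fun _ => (1 : ℝ)) α + Z * Zᵀ
         = vecMulVec α' (fun _ => (1 : ℝ)) + vecMulVec (fun _ => (1 : ℝ)) α' + Z' * Z'ᵀ) :
    α = α' ∧ ∃ O : Matrix (Fin k) (Fin k) ℝ,
      O * Oᵀ = 1 ∧ Oᵀ * O = 1 ∧ Z' = Z * O := by
  have hα : α = α' := by
    rcases Nat.eq_zero_or_pos n with hn | hn
    · subst hn; funext i; exact i.elim0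
    · exact lsm_alpha hn α α' Z Z' hZ hZ' heq
  refine ⟨hα, ?_⟩
  rw [hα] at heq
  exact lsm_aux Z Z' hrank (add_left_cancel heq)
end

section
/- Suppose Z* ∈ ℝ^{n×k} satisfies ν₁ ≤ λ_k(n^{-1} Z*^T Z*) for some ν₁ > 0 (λ_k = smallest eigenvalue). Then for any Z ∈ ℝ^{n×k}, min over orthogonal O ∈ ℝ^{k×k} of ‖Z - Z* O‖_F ≤ (1/(√(2(√2 - 1)) · √(n ν₁))) · ‖Z Z^T - Z* Z*^T‖_F. -/
/-!
Align `Z* O` with `Z` by an orthogonal `O` maximising `tr (Oᵀ Z*ᵀ Z)`: at a maximiser,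
`S = (Z* O)ᵀ Z` is symmetric positive semidefinite (a polar decomposition). Writing `X = Z* O`,
`D = (Z - X)ᵀ (Z - X)` and `G = Xᵀ X ⪰ n ν₁`, one has `Zᵀ Z = D + 2S - G`, and for `r = √2` the
squared Gram error `‖Z Zᵀ - X Xᵀ‖²_F` equals
`tr (D + r (S - G))² + (4 - 2r) tr (D S) + (2r - 2) tr (D G)`,
a sum of nonnegative terms whose last one is at least `2 (√2 - 1) n ν₁ ‖Z - X‖²_F`.
-/

open Matrix

/-- The singular values of a real matrix: square roots of the eigenvalues of `AᴴA`. -/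
noncomputable def singVals {m n : ℕ} (A : Matrix (Fin m) (Fin n) ℝ) : Fin n → ℝ :=
  fun i => Real.sqrt ((show (Aᵀ * A).IsHermitian by
    simpa using Matrix.isHermitian_conjTranspose_mul_self A).eigenvalues i)

/-- Frobenius norm. -/
noncomputable def frobNorm {m n : ℕ} (A : Matrix (Fin m) (Fin n) ℝ) : ℝ :=
  Real.sqrt ((Aᵀ * A).trace)

theorem Real.sqrt_le_one_div_sqrt_mul_sqrt {a b c : ℝ} (hc : 0 < c) (h : c * a ≤ b) :
    √a ≤ 1 / √c * √b := by
  rw [one_div_mul_eq_div, ← Real.sqrt_div' _ hc.le]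
  exact Real.sqrt_le_sqrt ((le_div_iff₀' hc).2 h)

namespace Matrix

section Orthogonal

variable {ι : Type*} [Fintype ι] [DecidableEq ι]

open scoped Matrix.Norms.L2Operator in
theorem isCompact_orthogonalGroup : IsCompact (orthogonalGroup ι ℝ : Set (Matrix ι ι ℝ)) := by
  refine Metric.isCompact_of_isClosed_isBounded isClosed_unitary ?_
  refine isBounded_iff_forall_norm_le.2 ⟨‖(1 : Matrix ι ι ℝ)‖, fun O hO => ?_⟩
  rw [← CStarRing.norm_mem_unitary_mul 1 hO, mul_one]

theorem exists_orthogonal_forall_trace_mul_le (A : Matrix ι ι ℝ) :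
    ∃ Q ∈ orthogonalGroup ι ℝ, ∀ R ∈ orthogonalGroup ι ℝ, (R * A).trace ≤ (Q * A).trace :=
  isCompact_orthogonalGroup.exists_isMaxOn ⟨1, one_mem _⟩
    (by fun_prop : Continuous fun R : Matrix ι ι ℝ => (R * A).trace).continuousOn

/-- Equal to `1` when `v = 0`, since `2 / 0 = 0`. -/
noncomputable def householder (v : ι → ℝ) : Matrix ι ι ℝ :=
  1 - (2 / (v ⬝ᵥ v)) • vecMulVec v v

theorem householder_mulVec (v w : ι → ℝ) :
    householder v *ᵥ w = w - (2 / (v ⬝ᵥ v) * (v ⬝ᵥ w)) • v := by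
  simp [householder, sub_mulVec, smul_mulVec, vecMulVec_mulVec, smul_smul]

theorem trace_householder_mul (v : ι → ℝ) (A : Matrix ι ι ℝ) :
    (householder v * A).trace = A.trace - 2 / (v ⬝ᵥ v) * (v ⬝ᵥ A *ᵥ v) := by
  rw [householder, sub_mul, one_mul, smul_mul_assoc, trace_sub, trace_smul, smul_eq_mul,
    trace_mul_comm, mul_vecMulVec, trace_vecMulVec, dotProduct_comm (A *ᵥ v)]

theorem householder_mem_orthogonalGroup (v : ι → ℝ) :
    householder v ∈ orthogonalGroup ι ℝ := by
  have hT : (householder v)ᵀ = householder v := by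
    simp [householder, transpose_sub, transpose_smul, transpose_vecMulVec]
  have hcoeff : 2 / (v ⬝ᵥ v) * (2 / (v ⬝ᵥ v)) * (v ⬝ᵥ v) = 2 / (v ⬝ᵥ v) + 2 / (v ⬝ᵥ v) := by
    rcases eq_or_ne (v ⬝ᵥ v) 0 with h | h
    · simp [h]
    · field_simp; ring
  rw [mem_orthogonalGroup_iff, hT, householder, sub_mul, mul_sub, mul_sub, one_mul, mul_one,
    smul_mul_smul, vecMulVec_mul_vecMulVec, vecMulVec_smul, smul_smul, hcoeff, add_smul, one_mul]
  abel

section TraceMaximizer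

variable {B : Matrix ι ι ℝ}

theorem dotProduct_mulVec_nonneg_of_forall_trace_mul_le
    (hB : ∀ R ∈ orthogonalGroup ι ℝ, (R * B).trace ≤ B.trace) (x : ι → ℝ) :
    0 ≤ x ⬝ᵥ B *ᵥ x := by
  rcases eq_or_ne x 0 with rfl | hx
  · simp
  have hxx : 0 < x ⬝ᵥ x := by simpa using (dotProduct_star_self_pos_iff (v := x)).2 hx
  have h := hB _ (householder_mem_orthogonalGroup x)
  rw [trace_householder_mul] at h
  have hquot : 0 ≤ 2 / (x ⬝ᵥ x) * (x ⬝ᵥ B *ᵥ x) := by linarith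
  exact nonneg_of_mul_nonneg_right hquot (by positivity)

/-- Composing the reflections in `eᵢ` and in `t eᵢ + eⱼ` gives a rotation in the `(i, j)`-plane. -/
theorem mul_sub_le_of_forall_trace_mul_le
    (hB : ∀ R ∈ orthogonalGroup ι ℝ, (R * B).trace ≤ B.trace) {i j : ι} (hij : i ≠ j) (t : ℝ) :
    t * (B j i - B i j) ≤ B i i + B j j := by
  set u : ι → ℝ := Pi.single i 1
  set x : ι → ℝ := t • Pi.single i 1 + Pi.single j 1
  have h := hB _ (mul_mem (householder_mem_orthogonalGroup u) (householder_mem_orthogonalGroup x))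
  rw [Matrix.mul_assoc, trace_householder_mul, ← mulVec_mulVec, householder_mulVec,
    trace_householder_mul] at h
  simp only [u, x, mulVec_add, mulVec_smul, mulVec_single, MulOpposite.op_one, one_smul,
    dotProduct_add, add_dotProduct, dotProduct_smul, smul_dotProduct, dotProduct_sub,
    dotProduct_single, single_dotProduct, Pi.add_apply, Pi.smul_apply, Pi.single_eq_same,
    Pi.single_eq_of_ne hij, Pi.single_eq_of_ne hij.symm, col_apply, smul_eq_mul, smul_add,
    mul_one, one_mul, mul_zero, add_zero, zero_add, div_one, tsub_le_iff_right] at h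
  have ht : 0 < t * t + 1 := by nlinarith [mul_self_nonneg t]
  field_simp at h
  nlinarith

theorem posSemidef_of_forall_trace_mul_le
    (hB : ∀ R ∈ orthogonalGroup ι ℝ, (R * B).trace ≤ B.trace) : B.PosSemidef := by
  refine .of_dotProduct_mulVec_nonneg ?_ fun x => by
    simpa using dotProduct_mulVec_nonneg_of_forall_trace_mul_le hB x
  ext i j
  rcases eq_or_ne j i with rfl | hji
  · rfl
  have hle := mul_sub_le_of_forall_trace_mul_le hB hji
  by_contra hne
  have hd : B i j - B j i ≠ 0 := sub_ne_zero.2 fun h => hne (by simp [h])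
  have := hle ((|B j j + B i i| + 1) / (B i j - B j i))
  rw [div_mul_cancel₀ _ hd] at this
  linarith [le_abs_self (B j j + B i i)]

end TraceMaximizer

open scoped MatrixOrder in
theorem IsHermitian.posSemidef_sub_smul_one {M : Matrix ι ι ℝ} (hM : M.IsHermitian) {ν : ℝ}
    (h : ∀ i, ν ≤ hM.eigenvalues i) : (M - ν • 1).PosSemidef := by
  rw [← Matrix.le_iff, ← Algebra.algebraMap_eq_smul_one,
    algebraMap_le_iff_le_spectrum (a := M) hM.isSelfAdjoint, hM.spectrum_real_eq_range_eigenvalues]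
  rintro _ ⟨i, rfl⟩
  exact h i

theorem posSemidef_gram_mul_orthogonal_sub_smul_one {m : Type*} [Fintype m] {Y : Matrix m ι ℝ}
    {O : Matrix ι ι ℝ} (hO : O ∈ orthogonalGroup ι ℝ) {c : ℝ}
    (h : (Yᵀ * Y - c • 1).PosSemidef) : ((Y * O)ᵀ * (Y * O) - c • 1).PosSemidef := by
  convert h.conjTranspose_mul_mul_same O using 1
  rw [conjTranspose_eq_transpose_of_trivial, Matrix.mul_sub, Matrix.sub_mul, Matrix.mul_smul,
    Matrix.mul_one, Matrix.smul_mul, (mem_orthogonalGroup_iff' ..).1 hO, transpose_mul]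
  simp only [Matrix.mul_assoc]

theorem exists_orthogonal_posSemidef_mul (A : Matrix ι ι ℝ) :
    ∃ Q ∈ orthogonalGroup ι ℝ, (Q * A).PosSemidef := by
  obtain ⟨Q, hQ, hmax⟩ := exists_orthogonal_forall_trace_mul_le A
  refine ⟨Q, hQ, posSemidef_of_forall_trace_mul_le fun R hR => ?_⟩
  rw [← Matrix.mul_assoc]
  exact hmax _ (mul_mem hR hQ)

end Orthogonal

section GramError

variable {ι m : Type*} [Fintype ι] [Fintype m]

theorem trace_transpose_mul_self_mul_nonneg (A : Matrix m ι ℝ) {S : Matrix ι ι ℝ}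
    (hS : S.PosSemidef) : 0 ≤ (Aᵀ * A * S).trace := by
  rw [Matrix.mul_assoc, trace_mul_comm]
  exact (hS.mul_mul_conjTranspose_same A).trace_nonneg

theorem trace_gram_sub_sq (Z X : Matrix m ι ℝ) :
    ((Z * Zᵀ - X * Xᵀ)ᵀ * (Z * Zᵀ - X * Xᵀ)).trace =
      (Zᵀ * Z * (Zᵀ * Z)).trace - 2 * ((Xᵀ * Z)ᵀ * (Xᵀ * Z)).trace
        + (Xᵀ * X * (Xᵀ * X)).trace := by
  have cyc : ∀ U V : Matrix m ι ℝ, (U * Uᵀ * (V * Vᵀ)).trace = (Uᵀ * V * (Vᵀ * U)).trace := by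
    intro U V
    rw [Matrix.mul_assoc, trace_mul_comm]
    simp only [Matrix.mul_assoc]
  have hZX : (Zᵀ * X * (Xᵀ * Z)).trace = (Xᵀ * Z * (Zᵀ * X)).trace := trace_mul_comm _ _
  simp only [transpose_sub, transpose_mul, transpose_transpose, Matrix.sub_mul, Matrix.mul_sub,
    trace_sub, cyc]
  rw [hZX]
  ring

theorem trace_sq_add_two_smul_sub_eq {D S G : Matrix ι ι ℝ} {r : ℝ} (hr : r ^ 2 = 2) :
    ((D + (2 : ℝ) • S - G) * (D + (2 : ℝ) • S - G)).trace - 2 * (S * S).trace + (G * G).trace =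
      ((D + r • (S - G)) * (D + r • (S - G))).trace + (4 - 2 * r) * (D * S).trace
        + (2 * r - 2) * (D * G).trace := by
  simp only [add_mul, mul_add, sub_mul, mul_sub, smul_mul_assoc, mul_smul_comm, smul_sub,
    trace_add, trace_sub, trace_smul, smul_eq_mul]
  rw [trace_mul_comm S D, trace_mul_comm G D, trace_mul_comm G S]
  linear_combination (2 * (S * G).trace - (S * S).trace - (G * G).trace) * hr

theorem mul_trace_le_trace_sq_add_two_smul_sub [DecidableEq ι] (A : Matrix m ι ℝ)
    {S G : Matrix ι ι ℝ} {σ : ℝ} (hS : S.PosSemidef) (hG : (G - σ • 1).PosSemidef) :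
    2 * (√2 - 1) * σ * (Aᵀ * A).trace ≤
      ((Aᵀ * A + (2 : ℝ) • S - G) * (Aᵀ * A + (2 : ℝ) • S - G)).trace - 2 * (S * S).trace
        + (G * G).trace := by
  have hr : √2 ^ 2 = 2 := Real.sq_sqrt zero_le_two
  rw [trace_sq_add_two_smul_sub_eq hr]
  set K := Aᵀ * A + √2 • (S - G)
  have hK : Kᵀ = K := by
    have hSt : Sᵀ = S := by simpa using hS.isHermitian.eq
    have hGt : Gᵀ = G := by simpa using hG.isHermitian.eq
    simp [K, transpose_add, transpose_smul, transpose_sub, hSt, hGt]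
  have hKK : 0 ≤ (K * K).trace := by
    simpa [hK] using (posSemidef_conjTranspose_mul_self K).trace_nonneg
  have hDS := trace_transpose_mul_self_mul_nonneg A hS
  have hDG := trace_transpose_mul_self_mul_nonneg A hG
  rw [Matrix.mul_sub, trace_sub, Matrix.mul_smul, Matrix.mul_one, trace_smul, smul_eq_mul] at hDG
  have h1 := Real.one_lt_sqrt_two
  have h2 : √2 < 2 := by nlinarith
  nlinarith [mul_nonneg (by linarith : (0 : ℝ) ≤ 4 - 2 * √2) hDS,
    mul_nonneg (by linarith : (0 : ℝ) ≤ 2 * √2 - 2) hDG]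

theorem mul_trace_le_trace_gram_sub_sq [DecidableEq ι] (X Z : Matrix m ι ℝ) {σ : ℝ}
    (hS : (Xᵀ * Z).PosSemidef) (hG : (Xᵀ * X - σ • 1).PosSemidef) :
    2 * (√2 - 1) * σ * ((Z - X)ᵀ * (Z - X)).trace ≤
      ((Z * Zᵀ - X * Xᵀ)ᵀ * (Z * Zᵀ - X * Xᵀ)).trace := by
  have hSt : (Xᵀ * Z)ᵀ = Xᵀ * Z := by simpa using hS.isHermitian.eq
  have hZX : Zᵀ * X = Xᵀ * Z := by rw [← hSt, transpose_mul, transpose_transpose]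
  have hZZ : Zᵀ * Z = (Z - X)ᵀ * (Z - X) + (2 : ℝ) • (Xᵀ * Z) - Xᵀ * X := by
    rw [transpose_sub, Matrix.sub_mul, Matrix.mul_sub, Matrix.mul_sub, hZX, two_smul]
    abel
  rw [trace_gram_sub_sq, hSt, hZZ]
  exact mul_trace_le_trace_sq_add_two_smul_sub (Z - X) hS hG

end GramError

end Matrix

/-- Procrustes-type error bound: if all eigenvalues of the symmetric matrix
`n⁻¹ Z*ᵀ Z*` are at least `ν₁ > 0`, then the rotation-aligned Frobenius error of
`Z` is controlled by the Gram matrix error: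
`min_O ‖Z - Z* O‖_F ≤ ‖Z Zᵀ - Z* Z*ᵀ‖_F / (√(2(√2-1)) √(n ν₁))`. -/
theorem procrustes_error_bound (n k : ℕ)
    (Zstar Z : Matrix (Fin n) (Fin k) ℝ) (ν₁ : ℝ) (hν : 0 < ν₁)
    (hM : ((n : ℝ)⁻¹ • (Zstarᵀ * Zstar)).IsHermitian)
    (heig : ∀ i, ν₁ ≤ hM.eigenvalues i) :
    ∃ O : Matrix (Fin k) (Fin k) ℝ, O * Oᵀ = 1 ∧ Oᵀ * O = 1 ∧
      frobNorm (Z - Zstar * O) ≤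
        (1 / (Real.sqrt (2 * (Real.sqrt 2 - 1)) * Real.sqrt (n * ν₁))) *
          frobNorm (Z * Zᵀ - Zstar * Zstarᵀ) := by
  obtain rfl | hn := Nat.eq_zero_or_pos n
  · refine ⟨1, by simp, by simp, ?_⟩
    rw [Subsingleton.elim (Z - Zstar * 1) 0]
    simp only [frobNorm, transpose_zero, Matrix.zero_mul, trace_zero, Real.sqrt_zero]
    positivity
  obtain ⟨Q, hQ, hQZ⟩ := exists_orthogonal_posSemidef_mul (Zstarᵀ * Z)
  have hO : Qᵀ ∈ orthogonalGroup (Fin k) ℝ := by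
    rw [mem_orthogonalGroup_iff, transpose_transpose, ← mem_orthogonalGroup_iff']
    exact hQ
  have hG : (Zstarᵀ * Zstar - (n * ν₁) • 1).PosSemidef := by
    convert (hM.posSemidef_sub_smul_one heig).smul (Nat.cast_nonneg (α := ℝ) n) using 1
    rw [smul_sub, smul_smul, smul_smul, mul_inv_cancel₀ (by positivity), one_smul]
  have hgram : Zstar * Qᵀ * (Zstar * Qᵀ)ᵀ = Zstar * Zstarᵀ := by
    rw [transpose_mul, transpose_transpose, Matrix.mul_assoc, ← Matrix.mul_assoc Qᵀ,
      (mem_orthogonalGroup_iff' ..).1 hQ, Matrix.one_mul]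
  refine ⟨Qᵀ, (mem_orthogonalGroup_iff ..).1 hO, (mem_orthogonalGroup_iff' ..).1 hO, ?_⟩
  rw [frobNorm, frobNorm, ← hgram, ← Real.sqrt_mul (by linarith [Real.one_lt_sqrt_two])]
  refine Real.sqrt_le_one_div_sqrt_mul_sqrt
    (mul_pos (by linarith [Real.one_lt_sqrt_two]) (by positivity)) ?_
  exact mul_trace_le_trace_gram_sub_sq _ _ (by simpa [Matrix.mul_assoc] using hQZ)
    (posSemidef_gram_mul_orthogonal_sub_smul_one hO hG)
end

section
/- Given the partitioned source latent matrix Z^{s} = (U_0^T, U^T)^T ∈ ℝ^{(n+m)×k} with J₁U_0 = U_0 (J₁ the n×n centering matrix) and J₂U = U (J₂ the m×m centering matrix), if (U_0', U') also satisfy these centering constraints, U_0 has full column rank, and α 1^T + 1 α^T + Z^s Z^{sT} = α' 1^T + 1 α'^T + Z^{s'} Z^{s'T} where Z^{s'} = (U_0'^T, U'^T)^T, then α = α' and there exists an orthogonal O ∈ ℝ^{k×k} with U_0' = U_0 O and U' = U O. -/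
/-!
Multiplying `Θ` by the all-ones vector kills the Gram part, because both blocks of `Zˢ` are
column-centered; what remains, `N α + (∑ α) 1`, determines `α`. Hence `Zˢ Zˢᵀ = Zˢ' Zˢ'ᵀ`.
Since `U₀` has full column rank, `Zˢ` is injective, and two matrices with the same Gram matrix
`A Aᴴ = B Bᴴ`, the first injective, differ by a unitary factor `O = (AᴴA)⁻¹ Aᴴ B`.
-/

open Matrix

namespace Matrix

section Centering

variable {ι κ R : Type*} [Fintype ι]

theorem one_vecMul_fromRows_eq_zero {ι' : Type*} [Fintype ι'] [Semiring R]
    {A₁ : Matrix ι κ R} {A₂ : Matrix ι' κ R} (h₁ : 1 ᵥ* A₁ = 0) (h₂ : 1 ᵥ* A₂ = 0) :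
    1 ᵥ* fromRows A₁ A₂ = 0 := by
  rw [← Sum.elim_one_one, sumElim_vecMul_fromRows, h₁, h₂, add_zero]

theorem mul_transpose_mulVec_one_eq_zero [Fintype κ] [CommSemiring R] (A : Matrix ι κ R)
    {B : Matrix ι κ R} (hB : 1 ᵥ* B = 0) : (A * Bᵀ) *ᵥ 1 = 0 := by
  rw [← mulVec_mulVec, mulVec_transpose, hB, mulVec_zero]

theorem vecMulVec_one_add_vecMulVec_one_add_mulVec_one_apply [CommSemiring R]
    (a : ι → R) {G : Matrix ι ι R} (hG : G *ᵥ 1 = 0) (i : ι) :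
    ((vecMulVec a 1 + vecMulVec 1 a + G) *ᵥ 1) i = Fintype.card ι * a i + ∑ j, a j := by
  rw [add_mulVec, hG, add_zero]
  simp only [mulVec, dotProduct, vecMulVec_apply, add_apply, Pi.one_apply, mul_one, one_mul,
    Finset.sum_add_distrib, Finset.sum_const, Finset.card_univ, nsmul_eq_mul]

theorem eq_of_vecMulVec_one_add_vecMulVec_one_add_eq [Field R] [CharZero R] {a a' : ι → R}
    {G G' : Matrix ι ι R} (hG : G *ᵥ 1 = 0) (hG' : G' *ᵥ 1 = 0)
    (h : vecMulVec a 1 + vecMulVec 1 a + G = vecMulVec a' 1 + vecMulVec 1 a' + G') :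
    a = a' := by
  have hrow : ∀ i, (Fintype.card ι : R) * a i + ∑ j, a j = Fintype.card ι * a' i + ∑ j, a' j :=
    fun i => by
      rw [← vecMulVec_one_add_vecMulVec_one_add_mulVec_one_apply a hG,
        ← vecMulVec_one_add_vecMulVec_one_add_mulVec_one_apply a' hG', h]
  funext i
  have hcard : (Fintype.card ι : R) ≠ 0 := Nat.cast_ne_zero.mpr (Fintype.card_pos_iff.mpr ⟨i⟩).ne'
  have hsum : ∑ j, a j = ∑ j, a' j := by
    have := Finset.sum_congr rfl fun j (_ : j ∈ Finset.univ) => hrow j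
    simp only [Finset.sum_add_distrib, ← Finset.mul_sum, Finset.sum_const, Finset.card_univ,
      nsmul_eq_mul] at this
    exact mul_left_cancel₀ (mul_ne_zero two_ne_zero hcard) (by linear_combination this)
  have := hrow i
  rw [hsum, add_left_inj] at this
  exact mul_left_cancel₀ hcard this

end Centering

section Injective

variable {ι κ : Type*} [Fintype κ]

theorem mulVec_injective_of_rank_eq_card {K : Type*} [Field K] {A : Matrix ι κ K}
    (hA : A.rank = Fintype.card κ) : Function.Injective A.mulVec := by
  have hker : Module.finrank K (LinearMap.ker A.mulVecLin) = 0 := by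
    have := LinearMap.finrank_range_add_finrank_ker A.mulVecLin
    rw [← rank, hA, Module.finrank_fintype_fun_eq_card] at this
    omega
  exact LinearMap.ker_eq_bot.mp (Submodule.finrank_eq_zero.mp hker)

theorem mulVec_injective_fromRows {R ι' : Type*} [Semiring R] {A₁ : Matrix ι κ R}
    (A₂ : Matrix ι' κ R) (h : Function.Injective A₁.mulVec) :
    Function.Injective (fromRows A₁ A₂).mulVec := fun x y hxy => by
  rw [fromRows_mulVec, fromRows_mulVec] at hxy
  exact h (funext fun i => congrFun hxy (Sum.inl i))

end Injective

section Gram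

open scoped ComplexOrder

variable {ι κ 𝕜 : Type*} [Fintype ι] [Fintype κ] [DecidableEq κ] [RCLike 𝕜]

theorem isUnit_conjTranspose_mul_self {A : Matrix ι κ 𝕜} (hA : Function.Injective A.mulVec) :
    IsUnit (Aᴴ * A) := by
  rw [← mulVec_injective_iff_isUnit]
  intro x y hxy
  have h : (Aᴴ * A) *ᵥ (x - y) = 0 := by rw [mulVec_sub, hxy, sub_self]
  rw [conjTranspose_mul_self_mulVec_eq_zero, mulVec_sub, sub_eq_zero] at h
  exact hA h

theorem exists_mem_unitaryGroup_eq_mul_of_mul_conjTranspose_eq {A B : Matrix ι κ 𝕜}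
    (hA : Function.Injective A.mulVec) (hAB : A * Aᴴ = B * Bᴴ) :
    ∃ O ∈ unitaryGroup κ 𝕜, B = A * O := by
  classical
  set G := Aᴴ * A with hGdef
  have hdet : IsUnit G.det := (isUnit_iff_isUnit_det G).mp (isUnit_conjTranspose_mul_self hA)
  have hGinvH : (G⁻¹)ᴴ = G⁻¹ := by
    rw [conjTranspose_nonsing_inv, hGdef, conjTranspose_mul, conjTranspose_conjTranspose]
  -- `A G⁻¹ Aᴴ` is the orthogonal projection onto the range of `A`; through `A Aᴴ = B Bᴴ`
  -- the identity `Aᴴ (1 - A G⁻¹ Aᴴ) = 0` passes to `B`.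
  have hAproj : Aᴴ * (1 - A * G⁻¹ * Aᴴ) = 0 := by
    rw [Matrix.mul_sub, Matrix.mul_one, ← Matrix.mul_assoc, ← Matrix.mul_assoc, ← hGdef,
      mul_nonsing_inv G hdet, Matrix.one_mul, sub_self]
  have hBproj : Bᴴ * (1 - A * G⁻¹ * Aᴴ) = 0 := by
    rw [← self_mul_conjTranspose_mul_eq_zero, ← hAB, Matrix.mul_assoc, hAproj, Matrix.mul_zero]
  have hB : B = A * (G⁻¹ * Aᴴ * B) := by
    rw [Matrix.mul_sub, Matrix.mul_one, sub_eq_zero] at hBproj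
    simpa only [conjTranspose_mul, conjTranspose_conjTranspose, hGinvH, Matrix.mul_assoc]
      using congrArg conjTranspose hBproj
  refine ⟨G⁻¹ * Aᴴ * B, ?_, hB⟩
  rw [mem_unitaryGroup_iff, star_eq_conjTranspose]
  calc G⁻¹ * Aᴴ * B * (G⁻¹ * Aᴴ * B)ᴴ = G⁻¹ * Aᴴ * (B * Bᴴ) * A * G⁻¹ := by
        simp only [conjTranspose_mul, conjTranspose_conjTranspose, hGinvH, Matrix.mul_assoc]
    _ = (G⁻¹ * G) * (G * G⁻¹) := by rw [← hAB]; simp only [hGdef, Matrix.mul_assoc]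
    _ = 1 := by rw [nonsing_inv_mul G hdet, mul_nonsing_inv G hdet, Matrix.one_mul]

end Gram

end Matrix

theorem partitioned_lsm_identifiability_general (n m k : ℕ)
    (α α' : (Fin n ⊕ Fin m) → ℝ)
    (U₀ U₀' : Matrix (Fin n) (Fin k) ℝ) (U U' : Matrix (Fin m) (Fin k) ℝ)
    (hU₀ : vecMul (fun _ => (1 : ℝ)) U₀ = 0)
    (hU₀' : vecMul (fun _ => (1 : ℝ)) U₀' = 0)
    (hU : vecMul (fun _ => (1 : ℝ)) U = 0)
    (hU' : vecMul (fun _ => (1 : ℝ)) U' = 0)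
    (hrank : U₀.rank = k)
    (Zs Zs' : Matrix (Fin n ⊕ Fin m) (Fin k) ℝ)
    (hZs : Zs = fromRows U₀ U) (hZs' : Zs' = fromRows U₀' U')
    (heq : vecMulVec α (fun _ => (1 : ℝ)) + vecMulVec (fun _ => (1 : ℝ)) α + Zs * Zsᵀ
         = vecMulVec α' (fun _ => (1 : ℝ)) + vecMulVec (fun _ => (1 : ℝ)) α' + Zs' * Zs'ᵀ) :
    α = α' ∧ ∃ O : Matrix (Fin k) (Fin k) ℝ,
      O * Oᵀ = 1 ∧ Oᵀ * O = 1 ∧ U₀' = U₀ * O ∧ U' = U * O := by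
  subst hZs hZs'
  have hα : α = α' := eq_of_vecMulVec_one_add_vecMulVec_one_add_eq
    (mul_transpose_mulVec_one_eq_zero _ (one_vecMul_fromRows_eq_zero hU₀ hU))
    (mul_transpose_mulVec_one_eq_zero _ (one_vecMul_fromRows_eq_zero hU₀' hU')) heq
  subst hα
  have hinj : Function.Injective (fromRows U₀ U).mulVec :=
    mulVec_injective_fromRows U (mulVec_injective_of_rank_eq_card (by rwa [Fintype.card_fin]))
  obtain ⟨O, hO, hZ⟩ := exists_mem_unitaryGroup_eq_mul_of_mul_conjTranspose_eq hinj
    (by simpa only [conjTranspose_eq_transpose_of_trivial] using add_left_cancel heq)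
  rw [fromRows_mul, fromRows_inj.eq_iff] at hZ
  have hstar : star O = Oᵀ := by rw [star_eq_conjTranspose, conjTranspose_eq_transpose_of_trivial]
  exact ⟨rfl, O, hstar ▸ mem_unitaryGroup_iff.mp hO, hstar ▸ mem_unitaryGroup_iff'.mp hO, hZ⟩

/-- Core of Proposition 1: identifiability for a partitioned source latent matrix
`Zˢ = (U₀ᵀ, Uᵀ)ᵀ` with both blocks column-centered and `U₀` of full column rank.
If two such parameterizations give the same `Θ = α 1ᵀ + 1 αᵀ + Zˢ Zˢᵀ`, then
`α = α'` and `U₀' = U₀ O`, `U' = U O` for a common orthogonal `O`. -/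
theorem partitioned_lsm_identifiability (n m k : ℕ) (hn : 1 ≤ n) (hm : 1 ≤ m)
    (α α' : (Fin n ⊕ Fin m) → ℝ)
    (U₀ U₀' : Matrix (Fin n) (Fin k) ℝ) (U U' : Matrix (Fin m) (Fin k) ℝ)
    (hU₀ : vecMul (fun _ => (1 : ℝ)) U₀ = 0)
    (hU₀' : vecMul (fun _ => (1 : ℝ)) U₀' = 0)
    (hU : vecMul (fun _ => (1 : ℝ)) U = 0)
    (hU' : vecMul (fun _ => (1 : ℝ)) U' = 0)
    (hrank : U₀.rank = k)
    (Zs Zs' : Matrix (Fin n ⊕ Fin m) (Fin k) ℝ)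
    (hZs : Zs = fromRows U₀ U) (hZs' : Zs' = fromRows U₀' U')
    (heq : vecMulVec α (fun _ => (1 : ℝ)) + vecMulVec (fun _ => (1 : ℝ)) α + Zs * Zsᵀ
         = vecMulVec α' (fun _ => (1 : ℝ)) + vecMulVec (fun _ => (1 : ℝ)) α' + Zs' * Zs'ᵀ) :
    α = α' ∧ ∃ O : Matrix (Fin k) (Fin k) ℝ,
      O * Oᵀ = 1 ∧ Oᵀ * O = 1 ∧ U₀' = U₀ * O ∧ U' = U * O :=
  partitioned_lsm_identifiability_general n m k α α' U₀ U₀' U U' hU₀ hU₀' hU hU' hrank Zs Zs' hZs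
    hZs' heq
end
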